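/- Let p ∈ A be a monic irreducible polynomial, and let O_{E,(p)} denote the localization of O_E at the multiplicative set A∖(p). Then for every n ≥ 0, p^{q^n}·e_n ∈ p·O_{E,(p)}, where e_n are the exponential coefficients of the Drinfeld module ρ. -/

import Mathlib

/-!
Integrality of the exponential coefficients of a Drinfeld module: if `p ∈ A = Fq[θ]` is
monic irreducible and `O_{E,(p)}` denotes the localization of `O_E` at `A ∖ (p)`, then
`p^{q^n}·e_n ∈ p·O_{E,(p)}` for all `n ≥ 0`, where `e_n` are the exponential coefficients
of a Drinfeld module `ρ` of rank `r ≥ 1` over `O_E`, determined by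
`ρ_θ = θ + a_1 τ + ⋯ + a_r τ^r`.
-/

noncomputable section

open Polynomial

variable (Fq : Type) [Field Fq] [Fintype Fq]
variable (E : Type) [Field E] [Algebra (RatFunc Fq) E]
  [FiniteDimensional (RatFunc Fq) E] [Algebra.IsSeparable (RatFunc Fq) E]

/-- The `A = Fq[θ]`-algebra structure on `E`, through `K = Fq(θ)`. -/
local instance instAE : Algebra (Polynomial Fq) E :=
  ((algebraMap (RatFunc Fq) E).comp (algebraMap (Polynomial Fq) (RatFunc Fq))).toAlgebra

/-- `θ` as an element of `E`. -/
def thetaE : E := algebraMap (RatFunc Fq) E RatFunc.X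

/-- The exponential coefficients `e_i ∈ E` of the Drinfeld module with
`ρ_θ = θ + a_1 τ + ⋯ + a_r τ^r`:  `e_0 = 1`, `e_j = 0` for `j < 0`, and
`(θ^{q^i} - θ) e_i = ∑_{l=1}^{r} a_l e_{i-l}^{q^l}` for `i ≥ 1`. -/
def eCoeff (r : ℕ) (a : ℕ → integralClosure (Polynomial Fq) E) : ℕ → E
  | 0 => 1
  | (i + 1) =>
      (thetaE Fq E ^ (Fintype.card Fq) ^ (i + 1) - thetaE Fq E)⁻¹ *
        ∑ l ∈ Finset.Icc 1 r,
          if h : 1 ≤ l ∧ l ≤ i + 1 then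
            (a l : E) * (eCoeff r a (i + 1 - l)) ^ (Fintype.card Fq) ^ l
          else 0
  decreasing_by omega

/-- `x ∈ p·O_{E,(p)}`: there are `u ∈ O_E` and `b ∈ A` with `p ∤ b` and `b·x = p·u`. -/
def MemPLocOE (p : Polynomial Fq) (x : E) : Prop :=
  ∃ (u : integralClosure (Polynomial Fq) E) (b : Polynomial Fq), ¬ p ∣ b ∧
    algebraMap (Polynomial Fq) E b * x = algebraMap (Polynomial Fq) E p * (u : E)

/-!
Put `fₙ = p^{q^n} eₙ / p`. Multiplying the recursion by `p^{q^n} = (p^{q^{n-l}})^{q^l}` gives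
`(θ^{q^n} - θ) p fₙ = ∑ a_l p^{q^l} f_{n-l}^{q^l}`. As `X^{q^n} - X` is squarefree, it equals
`p^ε c` with `ε ≤ 1` and `p ∤ c`; since `q^l ≥ 2 ≥ 1 + ε`, dividing by `p^{1+ε} c` leaves
`fₙ = c⁻¹ ∑ a_l p^{q^l-1-ε} f_{n-l}^{q^l}`, which lies in `O_{E,(p)}` by strong induction.
-/

namespace Subalgebra

variable {R L : Type*} [CommRing R] [CommRing L] [Algebra R L]

/-- `S⁻¹B`, realised inside `L`. -/
def localization (B : Subalgebra R L) (S : Submonoid R) : Subalgebra R L where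
  carrier := {x | ∃ s ∈ S, algebraMap R L s * x ∈ B}
  mul_mem' := by
    rintro x y ⟨s, hs, hx⟩ ⟨t, ht, hy⟩
    refine ⟨s * t, S.mul_mem hs ht, ?_⟩
    convert B.mul_mem hx hy using 1
    rw [map_mul]
    ring
  add_mem' := by
    rintro x y ⟨s, hs, hx⟩ ⟨t, ht, hy⟩
    refine ⟨s * t, S.mul_mem hs ht, ?_⟩
    convert B.add_mem (B.mul_mem (B.algebraMap_mem t) hx) (B.mul_mem (B.algebraMap_mem s) hy)
      using 1
    rw [map_mul]
    ring
  algebraMap_mem' a := ⟨1, S.one_mem, by simp [B.algebraMap_mem a]⟩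

theorem le_localization (B : Subalgebra R L) (S : Submonoid R) : B ≤ B.localization S :=
  fun x hx => ⟨1, S.one_mem, by simpa using hx⟩

theorem inv_algebraMap_mem_localization {K : Type*} [Field K] [Algebra R K]
    (B : Subalgebra R K) {S : Submonoid R} {s : R} (hs : s ∈ S) :
    (algebraMap R K s)⁻¹ ∈ B.localization S := by
  refine ⟨s, hs, ?_⟩
  by_cases h : algebraMap R K s = 0
  · simp [h]
  · simp [h, B.one_mem]

end Subalgebra

theorem Squarefree.exists_eq_pow_mul_not_dvd {M : Type*} [CommMonoidWithZero M]
    [WfDvdMonoid M] {f p : M} (hf : Squarefree f) (hf0 : f ≠ 0) (hp : Irreducible p) :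
    ∃ ε ≤ 1, ∃ c, ¬ p ∣ c ∧ f = p ^ ε * c := by
  obtain ⟨n, c, hc, rfl⟩ := WfDvdMonoid.max_power_factor hf0 hp
  refine ⟨n, ?_, c, hc, rfl⟩
  by_contra! hn
  exact hp.not_isUnit (hf p ⟨p ^ (n - 2) * c, by rw [← mul_assoc, ← pow_two, ← pow_add,
    Nat.add_sub_cancel' hn]⟩)

theorem FiniteField.squarefree_X_pow_card_pow_sub_X {K : Type*} [Field K] [Fintype K] {m : ℕ}
    (hm : m ≠ 0) : Squarefree (X ^ Fintype.card K ^ m - X : K[X]) := by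
  obtain ⟨p, _⟩ := CharP.exists K
  obtain ⟨k, -, hcard⟩ := FiniteField.card K p
  refine (galois_poly_separable p _ ?_).squarefree
  rw [hcard, ← pow_mul]
  exact dvd_pow_self p (Nat.mul_ne_zero k.ne_zero hm)

section

omit [Fintype Fq] [FiniteDimensional (RatFunc Fq) E] [Algebra.IsSeparable (RatFunc Fq) E]

variable {Fq} in
theorem algebraMap_polynomial_ne_zero {p : Fq[X]} (hp : p ≠ 0) : algebraMap Fq[X] E p ≠ 0 :=
  (map_ne_zero_iff _ (show Function.Injective (algebraMap Fq[X] E) from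
    (algebraMap (RatFunc Fq) E).injective.comp (RatFunc.algebraMap_injective Fq))).mpr hp

theorem thetaE_eq_algebraMap_X : thetaE Fq E = algebraMap Fq[X] E X :=
  (congrArg (algebraMap (RatFunc Fq) E) (RatFunc.algebraMap_X (K := Fq))).symm

variable {Fq E} in
theorem memPLocOE_of_div_mem_localization {p : Fq[X]} [(Ideal.span {p}).IsPrime] (hp0 : p ≠ 0)
    {x : E} (hx : x / algebraMap Fq[X] E p ∈
      (integralClosure Fq[X] E).localization (Ideal.span {p}).primeCompl) :
    MemPLocOE Fq E p x := by
  obtain ⟨s, hs, hsx⟩ := hx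
  have hπ : algebraMap Fq[X] E p ≠ 0 := algebraMap_polynomial_ne_zero E hp0
  refine ⟨⟨_, hsx⟩, s, fun hdvd => hs (Ideal.mem_span_singleton.mpr hdvd), ?_⟩
  field_simp

end

section

omit [FiniteDimensional (RatFunc Fq) E] [Algebra.IsSeparable (RatFunc Fq) E]

variable {Fq E} (r : ℕ) (a : ℕ → integralClosure Fq[X] E) (p : Fq[X])

theorem algebraMap_X_pow_sub_X_mul_eCoeff_succ (n : ℕ) :
    algebraMap Fq[X] E (X ^ Fintype.card Fq ^ (n + 1) - X) * eCoeff Fq E r a (n + 1) =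
      ∑ l ∈ Finset.Icc 1 r, if l ≤ n + 1 then
        (a l : E) * eCoeff Fq E r a (n + 1 - l) ^ Fintype.card Fq ^ l else 0 := by
  have hf : thetaE Fq E ^ Fintype.card Fq ^ (n + 1) - thetaE Fq E ≠ 0 := by
    rw [thetaE_eq_algebraMap_X, ← map_pow, ← map_sub]
    exact algebraMap_polynomial_ne_zero E
      (FiniteField.X_pow_card_pow_sub_X_ne_zero _ n.succ_ne_zero Fintype.one_lt_card)
  rw [map_sub, map_pow, ← thetaE_eq_algebraMap_X, eCoeff, ← mul_assoc, mul_inv_cancel₀ hf,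
    one_mul]
  refine Finset.sum_congr rfl fun l hl => ?_
  simp [(Finset.mem_Icc.mp hl).1]

def pScaledECoeff (n : ℕ) : E :=
  algebraMap Fq[X] E (p ^ Fintype.card Fq ^ n) * eCoeff Fq E r a n / algebraMap Fq[X] E p

theorem algebraMap_X_pow_sub_X_mul_pScaledECoeff_succ (hp0 : p ≠ 0) (n : ℕ) :
    algebraMap Fq[X] E (X ^ Fintype.card Fq ^ (n + 1) - X) *
        (algebraMap Fq[X] E p * pScaledECoeff r a p (n + 1)) =
      ∑ l ∈ Finset.Icc 1 r, if l ≤ n + 1 then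
        (a l : E) * (algebraMap Fq[X] E p * pScaledECoeff r a p (n + 1 - l)) ^ Fintype.card Fq ^ l
      else 0 := by
  simp only [pScaledECoeff, mul_div_cancel₀ _ (algebraMap_polynomial_ne_zero E hp0)]
  rw [mul_left_comm, algebraMap_X_pow_sub_X_mul_eCoeff_succ, Finset.mul_sum]
  refine Finset.sum_congr rfl fun l _ => ?_
  split_ifs with hl
  · rw [mul_pow, ← map_pow, ← pow_mul, ← pow_add, Nat.sub_add_cancel hl]
    ring
  · rw [mul_zero]

theorem pScaledECoeff_succ {n ε : ℕ} {c : Fq[X]} (hp0 : p ≠ 0) (hε : ε ≤ 1)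
    (hfac : X ^ Fintype.card Fq ^ (n + 1) - X = p ^ ε * c) :
    pScaledECoeff r a p (n + 1) = (algebraMap Fq[X] E c)⁻¹ * ∑ l ∈ Finset.Icc 1 r,
      if l ≤ n + 1 then (a l : E) * algebraMap Fq[X] E p ^ (Fintype.card Fq ^ l - (1 + ε)) *
        pScaledECoeff r a p (n + 1 - l) ^ Fintype.card Fq ^ l
      else 0 := by
  set π := algebraMap Fq[X] E p
  have hπ : π ≠ 0 := algebraMap_polynomial_ne_zero E hp0
  have hc : algebraMap Fq[X] E c ≠ 0 := by
    refine algebraMap_polynomial_ne_zero E ?_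
    rintro rfl
    exact FiniteField.X_pow_card_pow_sub_X_ne_zero _ n.succ_ne_zero Fintype.one_lt_card
      (by rw [hfac, mul_zero])
  have hrec := algebraMap_X_pow_sub_X_mul_pScaledECoeff_succ r a p hp0 n
  rw [hfac, map_mul, map_pow] at hrec
  have hterm : ∀ l ∈ Finset.Icc 1 r,
      (if l ≤ n + 1 then (a l : E) * π ^ (Fintype.card Fq ^ l - (1 + ε)) *
        pScaledECoeff r a p (n + 1 - l) ^ Fintype.card Fq ^ l else 0) =
      (π ^ (1 + ε))⁻¹ * (if l ≤ n + 1 then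
        (a l : E) * (π * pScaledECoeff r a p (n + 1 - l)) ^ Fintype.card Fq ^ l else 0) := by
    intro l hl
    have hql : 1 < Fintype.card Fq ^ l := Nat.one_lt_pow (by grind) Fintype.one_lt_card
    split_ifs
    · rw [pow_sub₀ _ hπ (by omega)]
      field_simp
      ring
    · rw [mul_zero]
  rw [Finset.sum_congr rfl hterm, ← Finset.mul_sum, ← hrec]
  field_simp
  ring

theorem pScaledECoeff_mem_localization [(Ideal.span {p}).IsPrime] (hp0 : p ≠ 0) (n : ℕ) :
    pScaledECoeff r a p n ∈
      (integralClosure Fq[X] E).localization (Ideal.span {p}).primeCompl := by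
  set R := (integralClosure Fq[X] E).localization (Ideal.span {p}).primeCompl
  induction n using Nat.strong_induction_on with
  | _ n ih =>
  cases n with
  | zero =>
    rw [pScaledECoeff, eCoeff, pow_zero, pow_one, mul_one,
      div_self (algebraMap_polynomial_ne_zero E hp0)]
    exact R.one_mem
  | succ n =>
  obtain ⟨ε, hε, c, hpc, hfac⟩ :=
    (FiniteField.squarefree_X_pow_card_pow_sub_X n.succ_ne_zero).exists_eq_pow_mul_not_dvd
      (FiniteField.X_pow_card_pow_sub_X_ne_zero _ n.succ_ne_zero Fintype.one_lt_card)
      ((Ideal.span_singleton_prime hp0).mp inferInstance).irreducible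
  have hcS : c ∈ (Ideal.span {p}).primeCompl := fun hc => hpc (Ideal.mem_span_singleton.mp hc)
  rw [pScaledECoeff_succ r a p hp0 hε hfac]
  refine R.mul_mem ((integralClosure Fq[X] E).inv_algebraMap_mem_localization hcS)
    (R.sum_mem fun l hl => ?_)
  split_ifs with hln
  · have ha : (a l : E) ∈ R := Subalgebra.le_localization _ _ (a l).2
    exact R.mul_mem (R.mul_mem ha (R.pow_mem (R.algebraMap_mem p) _))
      (R.pow_mem (ih _ (by grind)) _)
  · exact R.zero_mem

end

theorem exp_coeff_integrality
    (r : ℕ) (a : ℕ → integralClosure (Polynomial Fq) E)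
    (p : Polynomial Fq) (hp : Irreducible p) (n : ℕ) :
    MemPLocOE Fq E p
      (algebraMap (Polynomial Fq) E (p ^ (Fintype.card Fq) ^ n) * eCoeff Fq E r a n) := by
  have := (Ideal.span_singleton_prime hp.ne_zero).mpr hp.prime
  exact memPLocOE_of_div_mem_localization hp.ne_zero
    (pScaledECoeff_mem_localization r a p hp.ne_zero n)

end
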